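/- arXiv:1711.08395 — 3 statements merged into one kernel-verified Lean document; each statement's English description precedes it below -/
import Mathlib

section
/- Let e and q be coprime integers with 1 < e < q, and let w_1 < w_2 < ... < w_g be the gaps of the numerical semigroup generated by e and q, where g = (e-1)(q-1)/2. Then the sum w_1 + ... + w_g equals e*q*(e-1)*(q-1)/4 - (e^2-1)*(q^2-1)/12. -/
/-!
As `b ↦ b * q % e` permutes `range e`, every `n` is congruent to `b * q` modulo `e` for a unique
`b < e`, and `n` is a gap exactly when `n < b * q`. Hence the gaps are the numbers
`b * q - k * e` with `b < e` and `1 ≤ k ≤ b * q / e`, each occurring once. For fixed `b` they form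
an arithmetic progression with sum `((b q)² - e b q + e r - r²) / 2e`, where `r = b * q % e`;
as `b` runs over `range e` so does `r`, and what remains is the sum of a quadratic
polynomial in `b` over `b < e`.
-/

open Finset

section Arithmetic

variable {K : Type*} [Field K] [CharZero K]

lemma sum_range_cast_id (n : ℕ) : ∑ i ∈ range n, (i : K) = n * (n - 1) / 2 := by
  induction n with
  | zero => simp
  | succ n ih => rw [sum_range_succ, ih]; push_cast; ring

lemma sum_range_cast_sq (n : ℕ) :
    ∑ i ∈ range n, (i : K) ^ 2 = n * (n - 1) * (2 * n - 1) / 6 := by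
  induction n with
  | zero => simp
  | succ n ih => rw [sum_range_succ, ih]; push_cast; ring

lemma Nat.sum_range_div_sub_succ_mul {N d : ℕ} (hd : 0 < d) :
    ∑ k ∈ range (N / d), ((N - (k + 1) * d : ℕ) : K) =
      ((N : K) ^ 2 - d * N + d * (N % d : ℕ) - ((N % d : ℕ) : K) ^ 2) / (2 * d) := by
  have hd' : (d : K) ≠ 0 := Nat.cast_ne_zero.2 hd.ne'
  have hN : (N : K) = d * (N / d : ℕ) + (N % d : ℕ) := by
    exact_mod_cast (Nat.div_add_mod N d).symm
  have hterm : ∀ k ∈ range (N / d), ((N - (k + 1) * d : ℕ) : K) = N - d - k * d := by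
    intro k hk
    rw [Nat.cast_sub ((Nat.le_div_iff_mul_le hd).1 (mem_range.1 hk))]
    push_cast; ring
  rw [sum_congr rfl hterm, sum_sub_distrib, sum_const, card_range, ← sum_mul, sum_range_cast_id,
    nsmul_eq_mul, hN]
  field_simp
  ring

end Arithmetic

namespace Nat

lemma mapsTo_mul_mod_range (e q : ℕ) : Set.MapsTo (fun b => b * q % e) (range e) (range e) :=
  fun _ hb => mem_range.2 (mod_lt _ (zero_lt_of_lt (mem_range.1 hb)))

lemma injOn_mul_mod_range {e q : ℕ} (h : Coprime q e) :
    Set.InjOn (fun b => b * q % e) (range e) := by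
  intro b hb b' hb' hbb'
  simp only [coe_range, Set.mem_Iio] at hb hb'
  exact (ModEq.cancel_right_of_coprime (by rwa [Nat.gcd_comm]) hbb').eq_of_lt_of_lt hb hb'

lemma surjOn_mul_mod_range {e q : ℕ} (h : Coprime q e) :
    Set.SurjOn (fun b => b * q % e) (range e) (range e) :=
  surjOn_of_injOn_of_card_le _ (mapsTo_mul_mod_range e q) (injOn_mul_mod_range h) le_rfl

lemma sum_range_mul_mod {M : Type*} [AddCommMonoid M] {e q : ℕ} (h : Coprime q e) (f : ℕ → M) :
    ∑ b ∈ range e, f (b * q % e) = ∑ b ∈ range e, f b :=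
  sum_nbij _ (mapsTo_mul_mod_range e q) (injOn_mul_mod_range h) (surjOn_mul_mod_range h)
    fun _ _ => rfl

lemma not_exists_eq_mul_add_mul_iff {e q n : ℕ} (he : 0 < e) (h : Coprime q e) :
    (¬ ∃ a b, n = a * e + b * q) ↔ ∃ b < e, ∃ k, 0 < k ∧ n + k * e = b * q := by
  constructor
  · intro hn
    obtain ⟨b, hb, hbn⟩ := surjOn_mul_mod_range h (mem_range.2 (mod_lt n he))
    simp only [coe_range, Set.mem_Iio] at hb
    have hlt : n < b * q := lt_of_not_ge fun hle => by
      obtain ⟨a, ha⟩ := (modEq_iff_dvd' hle).1 hbn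
      exact hn ⟨a, b, by rw [mul_comm a]; omega⟩
    obtain ⟨k, hk⟩ := (modEq_iff_dvd' hlt.le).1 hbn.symm
    refine ⟨b, hb, k, pos_of_ne_zero ?_, by rw [mul_comm k]; omega⟩
    rintro rfl
    omega
  · rintro ⟨b, hb, k, hk, hnk⟩ ⟨a, c, rfl⟩
    have hbq : b * q = c * q + (a + k) * e := by rw [← hnk]; ring
    have hcb : c * q % e = b * q % e := by rw [hbq, add_mul_mod_self_right]
    have hc : c < b := Nat.lt_of_mul_lt_mul_right (a := q) (by nlinarith [Nat.mul_pos hk he])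
    exact hc.ne (injOn_mul_mod_range h (by simp; omega) (by simpa using hb) hcb)

lemma sum_not_exists_eq_mul_add_mul {M : Type*} [AddCommMonoid M] {e q : ℕ} (he : 0 < e)
    (h : Coprime q e) (hfin : {n : ℕ | ¬ ∃ a b, n = a * e + b * q}.Finite) (f : ℕ → M) :
    ∑ n ∈ hfin.toFinset, f n =
      ∑ b ∈ range e, ∑ k ∈ range (b * q / e), f (b * q - (k + 1) * e) := by
  rw [sum_sigma']
  symm
  refine sum_bij (fun x _ => x.1 * q - (x.2 + 1) * e) ?_ ?_ ?_ fun _ _ => rfl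
  · rintro ⟨b, k⟩ hbk
    simp only [mem_sigma, mem_range] at hbk
    have hke : (k + 1) * e ≤ b * q := (le_div_iff_mul_le he).1 hbk.2
    rw [Set.Finite.mem_toFinset]
    exact (not_exists_eq_mul_add_mul_iff he h).2
      ⟨b, hbk.1, k + 1, succ_pos k, Nat.sub_add_cancel hke⟩
  · rintro ⟨b, k⟩ hbk ⟨b', k'⟩ hbk' hn
    simp only [mem_sigma, mem_range] at hbk hbk' hn
    have hke : (k + 1) * e ≤ b * q := (le_div_iff_mul_le he).1 hbk.2
    have hke' : (k' + 1) * e ≤ b' * q := (le_div_iff_mul_le he).1 hbk'.2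
    have hmod : b * q % e = b' * q % e := by
      rw [← Nat.sub_add_cancel hke, ← Nat.sub_add_cancel hke', hn, add_mul_mod_self_right,
        add_mul_mod_self_right]
    obtain rfl := injOn_mul_mod_range h (by simpa using hbk.1) (by simpa using hbk'.1) hmod
    have hkk' : (k + 1) * e = (k' + 1) * e := by omega
    obtain rfl : k = k' := by simpa using Nat.eq_of_mul_eq_mul_right he hkk'
    rfl
  · intro n hn
    rw [Set.Finite.mem_toFinset] at hn
    obtain ⟨b, hb, k, hk, hnk⟩ := (not_exists_eq_mul_add_mul_iff he h).1 hn
    obtain ⟨k, rfl⟩ : ∃ k', k = k' + 1 := ⟨k - 1, by omega⟩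
    have hk' : k < b * q / e := lt_iff_add_one_le.2 ((le_div_iff_mul_le he).2 (by omega))
    exact ⟨⟨b, k⟩, mem_sigma.2 ⟨mem_range.2 hb, mem_range.2 hk'⟩,
      show b * q - (k + 1) * e = n by omega⟩

end Nat

theorem stmt_2_general (e q : ℕ) (he : 2 ≤ e) (hcop : Nat.Coprime e q)
    (hfin : {n : ℕ | ¬ ∃ a b : ℕ, n = a * e + b * q}.Finite) :
    ∑ w ∈ hfin.toFinset, (w : ℚ) =
      (e : ℚ) * q * (e - 1) * (q - 1) / 4 - ((e : ℚ) ^ 2 - 1) * ((q : ℚ) ^ 2 - 1) / 12 := by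
  have he0 : 0 < e := by omega
  calc ∑ w ∈ hfin.toFinset, (w : ℚ)
      = ∑ b ∈ range e, ∑ k ∈ range (b * q / e), ((b * q - (k + 1) * e : ℕ) : ℚ) :=
        Nat.sum_not_exists_eq_mul_add_mul he0 hcop.symm hfin _
    _ = ∑ b ∈ range e, (((b * q : ℕ) : ℚ) ^ 2 - e * (b * q : ℕ)) / (2 * e) +
          ∑ b ∈ range e, (e * (b * q % e : ℕ) - ((b * q % e : ℕ) : ℚ) ^ 2) / (2 * e) := by
        rw [← sum_add_distrib]
        refine sum_congr rfl fun b _ => ?_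
        rw [Nat.sum_range_div_sub_succ_mul he0]
        ring
    _ = ∑ b ∈ range e, (((b * q : ℕ) : ℚ) ^ 2 - e * (b * q : ℕ)) / (2 * e) +
          ∑ b ∈ range e, (e * b - (b : ℚ) ^ 2) / (2 * e) := by
        rw [Nat.sum_range_mul_mod hcop.symm fun r => (e * r - (r : ℚ) ^ 2) / (2 * e)]
    _ = ((q : ℚ) ^ 2 - 1) / (2 * e) * ∑ b ∈ range e, (b : ℚ) ^ 2 +
          (1 - q) / 2 * ∑ b ∈ range e, (b : ℚ) := by
        rw [← sum_add_distrib, mul_sum, mul_sum, ← sum_add_distrib]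
        refine sum_congr rfl fun b _ => ?_
        field_simp
        push_cast
        ring
    _ = _ := by
        rw [sum_range_cast_sq, sum_range_cast_id]
        field_simp
        ring

theorem stmt_2 (e q : ℕ) (he : 2 ≤ e) (heq : e < q) (hcop : Nat.Coprime e q)
    (hfin : {n : ℕ | ¬ ∃ a b : ℕ, n = a * e + b * q}.Finite) :
    ∑ w ∈ hfin.toFinset, (w : ℚ) =
      (e : ℚ) * q * (e - 1) * (q - 1) / 4 - ((e : ℚ) ^ 2 - 1) * ((q : ℚ) ^ 2 - 1) / 12 :=
  stmt_2_general e q he hcop hfin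
end

section
/- Let e and q be coprime integers with 2 ≤ e < q. The quantity (e-3)*(q-3)/2 + floor(q/e) - 1 equals zero if and only if (e,q) is one of (2, 2g+1) for some g ≥ 1 (i.e., e = 2 and q odd ≥ 3), or (e,q) = (3,4), or (e,q) = (3,5). -/
/-!
For `e = 2` coprimality forces `q = 2k + 1`, and then `-(2k - 2)/2 + k - 1 = 0`.
For `e = 3` the first term vanishes, leaving `⌊q/3⌋ - 1`, which is zero exactly for
`q ∈ {3, 4, 5}`. For `e ≥ 4` both `(e - 3)(q - 3)/2` and `⌊q/e⌋` are positive.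
-/

def modality (e q : ℕ) : ℚ := ((e : ℚ) - 3) * ((q : ℚ) - 3) / 2 + (q / e : ℕ) - 1

lemma modality_two_of_odd {q : ℕ} (hq : Odd q) : modality 2 q = 0 := by
  obtain ⟨k, rfl⟩ := hq
  have hdiv : (2 * k + 1) / 2 = k := by omega
  rw [modality, hdiv]
  push_cast
  ring

lemma modality_three (q : ℕ) : modality 3 q = (q / 3 : ℕ) - 1 := by
  simp [modality]

lemma modality_pos {e q : ℕ} (he : 4 ≤ e) (heq : e < q) : 0 < modality e q := by
  have he' : (1 : ℚ) ≤ (e : ℚ) - 3 := by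
    have : (4 : ℚ) ≤ e := by exact_mod_cast he
    linarith
  have hq' : (2 : ℚ) ≤ (q : ℚ) - 3 := by
    have : (5 : ℚ) ≤ q := by exact_mod_cast (show 5 ≤ q by omega)
    linarith
  have hfloor : (1 : ℚ) ≤ (q / e : ℕ) := by
    exact_mod_cast (Nat.one_le_div_iff (by omega)).mpr heq.le
  rw [modality]
  nlinarith

theorem stmt_4 (e q : ℕ) (he : 2 ≤ e) (heq : e < q) (hcop : Nat.Coprime e q) :
    ((e : ℚ) - 3) * ((q : ℚ) - 3) / 2 + (q / e : ℕ) - 1 = 0 ↔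
      (e = 2 ∧ Odd q) ∨ (e = 3 ∧ q = 4) ∨ (e = 3 ∧ q = 5) := by
  change modality e q = 0 ↔ _
  obtain rfl | rfl | he4 : e = 2 ∨ e = 3 ∨ 4 ≤ e := by omega
  · have hq : Odd q := Nat.coprime_two_left.mp hcop
    simp [modality_two_of_odd hq, hq]
  · rw [modality_three, sub_eq_zero, Nat.cast_eq_one]
    omega
  · exact iff_of_false (modality_pos he4 heq).ne' (by omega)
end

section
/- Let R be a commutative ring and f₁, f₂ ∈ R[x, y]. Then the polynomial (f₁(x,y)f₂(z,y) - f₁(z,y)f₂(x,y)) - (f₁(x,y)f₂(x,w) - f₁(z,y)f₂(z,w)) - (f₁(z,w)f₂(z,y) - f₁(x,w)f₂(x,y)) + (f₁(z,w)f₂(x,w) - f₁(x,w)f₂(z,w)), viewed in R[x,y,z,w], is divisible by (z - x)·(w - y). -/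
/-!
Write `a, b, c, d` for `f₁` at `(x,y), (z,y), (x,w), (z,w)` and `A, B, C, D` likewise for `f₂`.
The numerator is the cross determinant `(a - d)(B - C) - (b - c)(A - D)`. With `u = a - b`,
`v = a - c` and the double difference `P = a - b - c + d` (and `U, V, P'` for `f₂`) it equals
`2(uV - vU) - P(V - U) + P'(v - u)`. Here `z - x` divides `u, U`, `w - y` divides `v, V`, and
`(z - x)(w - y)` divides `P, P'`, as one sees on monomials:
`x^i y^j - z^i y^j - x^i w^j + z^i w^j = (x^i - z^i)(y^j - w^j)`.
-/

open MvPolynomial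

theorem mul_dvd_cross_diff_of_dvd_sub {S : Type*} [CommRing S] {m n a b c d a' b' c' d' : S}
    (hab : m ∣ a - b) (hac : n ∣ a - c) (hab' : m ∣ a' - b') (hac' : n ∣ a' - c')
    (h : m * n ∣ a - b - c + d) (h' : m * n ∣ a' - b' - c' + d') :
    m * n ∣ (a - d) * (b' - c') - (b - c) * (a' - d') := by
  have key : (a - d) * (b' - c') - (b - c) * (a' - d')
      = 2 * ((a - b) * (a' - c')) - 2 * ((a - c) * (a' - b'))
        - (a - b - c + d) * ((a' - c') - (a' - b'))
        + (a' - b' - c' + d') * ((a - c) - (a - b)) := by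
    ring
  have hmn : m * n ∣ (a - c) * (a' - b') := mul_comm m n ▸ mul_dvd_mul hac hab'
  rw [key]
  exact ((((mul_dvd_mul hab hac').mul_left 2).sub (hmn.mul_left 2)).sub (h.mul_right _)).add
    (h'.mul_right _)

namespace MvPolynomial

variable {σ R S : Type*} [CommSemiring R] [CommRing S] [Algebra R S]

theorem dvd_aeval_sub_aeval (f : MvPolynomial σ R) {s t : σ → S} {d : S}
    (h : ∀ i, d ∣ s i - t i) : d ∣ aeval s f - aeval t f := by
  -- evaluation commutes with `S → S ⧸ (d)`, where `s` and `t` agree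
  simp only [← Ideal.mem_span_singleton, ← Ideal.Quotient.mk_eq_mk_iff_sub_mem,
    ← Ideal.Quotient.mkₐ_eq_mk R] at h ⊢
  rw [comp_aeval_apply, comp_aeval_apply, _root_.funext h]

theorem sub_dvd_aeval_sub_aeval_left (f : MvPolynomial (Fin 2) R) (x y z : S) :
    z - x ∣ aeval ![x, y] f - aeval ![z, y] f :=
  dvd_aeval_sub_aeval f <|
    Fin.forall_fin_two.2 ⟨by simpa using dvd_sub_comm.2 (dvd_refl (z - x)), by simp⟩

theorem sub_dvd_aeval_sub_aeval_right (f : MvPolynomial (Fin 2) R) (x y w : S) :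
    w - y ∣ aeval ![x, y] f - aeval ![x, w] f :=
  dvd_aeval_sub_aeval f <|
    Fin.forall_fin_two.2 ⟨by simp, by simpa using dvd_sub_comm.2 (dvd_refl (w - y))⟩

theorem mul_sub_dvd_aeval_double_sub (f : MvPolynomial (Fin 2) R) (x y z w : S) :
    (z - x) * (w - y) ∣
      aeval ![x, y] f - aeval ![z, y] f - aeval ![x, w] f + aeval ![z, w] f := by
  induction f using MvPolynomial.induction_on' with
  | monomial u a =>
    simp only [aeval_monomial, Finsupp.prod_fintype _ _ (fun _ => pow_zero _), Fin.prod_univ_two,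
      Matrix.cons_val_zero, Matrix.cons_val_one]
    have hxz := mul_dvd_mul (sub_dvd_pow_sub_pow z x (u 0)) (sub_dvd_pow_sub_pow w y (u 1))
    convert hxz.mul_left (algebraMap R S a) using 1
    ring
  | add p q hp hq =>
    convert dvd_add hp hq using 1
    simp only [map_add]
    ring

theorem mul_sub_dvd_aeval_cross_diff (f₁ f₂ : MvPolynomial (Fin 2) R) (x y z w : S) :
    (z - x) * (w - y) ∣
      (aeval ![x, y] f₁ - aeval ![z, w] f₁) * (aeval ![z, y] f₂ - aeval ![x, w] f₂)
        - (aeval ![z, y] f₁ - aeval ![x, w] f₁) * (aeval ![x, y] f₂ - aeval ![z, w] f₂) :=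
  mul_dvd_cross_diff_of_dvd_sub (sub_dvd_aeval_sub_aeval_left f₁ x y z)
    (sub_dvd_aeval_sub_aeval_right f₁ x y w) (sub_dvd_aeval_sub_aeval_left f₂ x y z)
    (sub_dvd_aeval_sub_aeval_right f₂ x y w) (mul_sub_dvd_aeval_double_sub f₁ x y z w)
    (mul_sub_dvd_aeval_double_sub f₂ x y z w)

end MvPolynomial

theorem stmt_17 (R : Type*) [CommRing R] (f₁ f₂ : MvPolynomial (Fin 2) R) :
    -- variables: x = X 0, y = X 1, z = X 2, w = X 3
    (fun (A : MvPolynomial (Fin 2) R → Fin 4 → Fin 4 → MvPolynomial (Fin 4) R) =>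
      (X 2 - X 0) * (X 3 - X 1) ∣
        ((A f₁ 0 1 * A f₂ 2 1 - A f₁ 2 1 * A f₂ 0 1)
          - (A f₁ 0 1 * A f₂ 0 3 - A f₁ 2 1 * A f₂ 2 3)
          - (A f₁ 2 3 * A f₂ 2 1 - A f₁ 0 3 * A f₂ 0 1)
          + (A f₁ 2 3 * A f₂ 0 3 - A f₁ 0 3 * A f₂ 2 3)))
      (fun f i j => MvPolynomial.aeval ![X i, X j] f) := by
  convert mul_sub_dvd_aeval_cross_diff f₁ f₂ (X 0 : MvPolynomial (Fin 4) R) (X 1) (X 2) (X 3)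
    using 2
  ring
end
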